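/- (Monotone Convergence Theorem) Let (X, 𝒰, ∫) be a complete Daniell space and let (f_n) be a sequence in 𝒰 that is pointwise monotone (non-increasing or non-decreasing) and satisfies |∫f_n| ≤ M for some constant M and all n ∈ ℕ. Then there exists f ∈ 𝒰 such that ∫|f_n − f| → 0, f_n(x) → f(x) for all x outside a null set, and |∫f| ≤ M. -/

import Mathlib

/-!
By negation it suffices to treat a non-decreasing sequence. Its increments `gₙ = fₙ₊₁ - fₙ` are
nonnegative with `∑ ∫ gₙ ≤ M - ∫ f₀`, so completeness puts `f = f₀ + ∑ gₙ` in `𝒰`. The set `S`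
where `∑ gₙ` diverges is null: its indicator is represented by `|g₀|, -|g₀|, |g₁|, -|g₁|, …`, and
for every `t > 0` it eventually lies below `t ∑_{n<N} |gₙ|`, so `∫ χ_S ≤ t ∑ ∫ |gₙ|`.
Off `S` we have `fₙ ↑ f`, hence `(fₙ - f)⁺` vanishes off `S` and has integral `0`, while
`(f - fₙ)⁺` decreases to `0` everywhere (on `S` because `fₙ → ∞`), so condition (II) gives
`∫ |fₙ - f| → 0`.
-/

open Filter Topology

/-- A Daniell space: a Riesz space `U` of real-valued functions on `X` together with a
positive linear functional `integral` satisfying the Daniell continuity condition (II). -/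
structure DaniellSpace (X : Type*) where
  U : Set (X → ℝ)
  integral : (X → ℝ) → ℝ
  zero_mem : (0 : X → ℝ) ∈ U
  add_mem : ∀ {f g : X → ℝ}, f ∈ U → g ∈ U → f + g ∈ U
  smul_mem : ∀ (c : ℝ) {f : X → ℝ}, f ∈ U → c • f ∈ U
  sup_mem : ∀ {f g : X → ℝ}, f ∈ U → g ∈ U → f ⊔ g ∈ U
  inf_mem : ∀ {f g : X → ℝ}, f ∈ U → g ∈ U → f ⊓ g ∈ U
  integral_add : ∀ {f g : X → ℝ}, f ∈ U → g ∈ U →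
    integral (f + g) = integral f + integral g
  integral_smul : ∀ (c : ℝ) {f : X → ℝ}, f ∈ U → integral (c • f) = c * integral f
  integral_nonneg : ∀ {f : X → ℝ}, f ∈ U → (∀ x, 0 ≤ f x) → 0 ≤ integral f
  integral_tendsto_zero : ∀ f : ℕ → X → ℝ, (∀ n, f n ∈ U) → Antitone f →
    (∀ x, Tendsto (fun n => f n x) atTop (𝓝 (0 : ℝ))) →
    Tendsto (fun n => integral (f n)) atTop (𝓝 (0 : ℝ))

/-- `f ≃ ∑ fₙ` : the `fₙ` belong to `U`, `∑ ∫|fₙ| < ∞`, and `f x = ∑ fₙ x` at every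
point where the series converges absolutely. -/
def DaniellSpace.Rep {X : Type*} (D : DaniellSpace X) (f : X → ℝ) (fs : ℕ → X → ℝ) : Prop :=
  (∀ n, fs n ∈ D.U) ∧ (Summable fun n => D.integral |fs n|) ∧
  ∀ x, (Summable fun n => |fs n x|) → HasSum (fun n => fs n x) (f x)

/-- The extension `𝒰*` of `𝒰`. -/
def DaniellSpace.Ustar {X : Type*} (D : DaniellSpace X) : Set (X → ℝ) :=
  {f | ∃ fs, D.Rep f fs}

-- The integral on `𝒰*`: `∫ f = ∑ ∫ fₙ` for any representation `f ≃ ∑ fₙ`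
-- (the value is independent of the representation).
open Classical in
noncomputable def DaniellSpace.integralStar {X : Type*} (D : DaniellSpace X)
    (f : X → ℝ) : ℝ :=
  if h : ∃ fs, D.Rep f fs then ∑' n, D.integral (h.choose n) else 0

/-- A Daniell space is complete if `f ≃ ∑ fₙ` with all `fₙ ∈ 𝒰` implies `f ∈ 𝒰`. -/
def DaniellSpace.Complete {X : Type*} (D : DaniellSpace X) : Prop :=
  ∀ (f : X → ℝ) (fs : ℕ → X → ℝ), D.Rep f fs → f ∈ D.U

/-- A null set: its characteristic function is a null function. -/
def DaniellSpace.NullSet {X : Type*} (D : DaniellSpace X) (S : Set X) : Prop :=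
  S.indicator (fun _ => (1 : ℝ)) ∈ D.U ∧ D.integral (S.indicator fun _ => (1 : ℝ)) = 0

theorem tendsto_of_hasSum_sub {G : Type*} [AddCommGroup G] [TopologicalSpace G]
    [ContinuousAdd G] {u : ℕ → G} {a : G} (h : HasSum (fun n => u (n + 1) - u n) a) :
    Tendsto u atTop (𝓝 (u 0 + a)) := by
  simpa only [Finset.sum_range_sub, add_sub_cancel] using h.tendsto_sum_nat.const_add (u 0)

theorem tendsto_atTop_of_not_summable_sub {u : ℕ → ℝ} (hu : Monotone u)
    (h : ¬Summable fun n => u (n + 1) - u n) : Tendsto u atTop atTop := by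
  have hsum := (not_summable_iff_tendsto_nat_atTop_of_nonneg
    fun n => sub_nonneg.2 (hu n.le_succ)).1 h
  simp_rw [Finset.sum_range_sub] at hsum
  simpa using tendsto_atTop_add_const_left _ (u 0) hsum

namespace DaniellSpace

variable {X : Type*}

def toSubmodule (D : DaniellSpace X) : Submodule ℝ (X → ℝ) where
  carrier := D.U
  add_mem' := D.add_mem
  zero_mem' := D.zero_mem
  smul_mem' := D.smul_mem

variable {D : DaniellSpace X} {f g : X → ℝ}

theorem neg_mem (hf : f ∈ D.U) : -f ∈ D.U := D.toSubmodule.neg_mem hf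

theorem sub_mem (hf : f ∈ D.U) (hg : g ∈ D.U) : f - g ∈ D.U := D.toSubmodule.sub_mem hf hg

theorem sum_mem {ι : Type*} {s : Finset ι} {fs : ι → X → ℝ} (hfs : ∀ i ∈ s, fs i ∈ D.U) :
    ∑ i ∈ s, fs i ∈ D.U :=
  D.toSubmodule.sum_mem hfs

theorem abs_mem (hf : f ∈ D.U) : |f| ∈ D.U := D.sup_mem hf (neg_mem hf)

theorem integral_zero : D.integral 0 = 0 := by simpa using D.integral_smul 0 D.zero_mem

theorem integral_neg (hf : f ∈ D.U) : D.integral (-f) = -D.integral f := by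
  simpa using D.integral_smul (-1) hf

theorem integral_sub (hf : f ∈ D.U) (hg : g ∈ D.U) :
    D.integral (f - g) = D.integral f - D.integral g := by
  rw [sub_eq_add_neg, D.integral_add hf (neg_mem hg), integral_neg hg, sub_eq_add_neg]

theorem integral_sum {ι : Type*} (s : Finset ι) {fs : ι → X → ℝ} (hfs : ∀ i ∈ s, fs i ∈ D.U) :
    D.integral (∑ i ∈ s, fs i) = ∑ i ∈ s, D.integral (fs i) := by
  classical
  induction s using Finset.induction_on with
  | empty => simpa using integral_zero
  | insert i s hi ih =>
    have hs : ∀ j ∈ s, fs j ∈ D.U := fun j hj => hfs j (s.mem_insert_of_mem hj)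
    rw [Finset.sum_insert hi, Finset.sum_insert hi,
      D.integral_add (hfs i (s.mem_insert_self i)) (sum_mem hs), ih hs]

theorem integral_mono (hf : f ∈ D.U) (hg : g ∈ D.U) (hfg : f ≤ g) :
    D.integral f ≤ D.integral g := by
  have h := D.integral_nonneg (sub_mem hg hf) fun x => sub_nonneg.2 (hfg x)
  rw [integral_sub hg hf] at h
  linarith

theorem abs_integral_le (hf : f ∈ D.U) : |D.integral f| ≤ D.integral |f| := by
  refine abs_le.2 ⟨?_, integral_mono hf (abs_mem hf) fun x => le_abs_self (f x)⟩
  have h := integral_mono (neg_mem hf) (abs_mem hf) fun x => neg_le_abs (f x)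
  rw [integral_neg hf] at h
  linarith

theorem tendsto_integral_of_tendsto_integral_abs_sub {fs : ℕ → X → ℝ} (hfs : ∀ n, fs n ∈ D.U)
    (hf : f ∈ D.U) (h : Tendsto (fun n => D.integral |fs n - f|) atTop (𝓝 0)) :
    Tendsto (fun n => D.integral (fs n)) atTop (𝓝 (D.integral f)) := by
  refine tendsto_iff_norm_sub_tendsto_zero.2 (squeeze_zero_norm (fun n => ?_) h)
  rw [norm_norm, Real.norm_eq_abs, ← integral_sub (hfs n) hf]
  exact abs_integral_le (sub_mem (hfs n) hf)

theorem tendsto_integral_of_monotone {fs : ℕ → X → ℝ} (hfs : ∀ n, fs n ∈ D.U) (hf : f ∈ D.U)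
    (hmono : Monotone fs) (hlim : ∀ x, Tendsto (fun n => fs n x) atTop (𝓝 (f x))) :
    Tendsto (fun n => D.integral (fs n)) atTop (𝓝 (D.integral f)) := by
  have h := D.integral_tendsto_zero (fun n => f - fs n) (fun n => sub_mem hf (hfs n))
    (fun m n hmn => sub_le_sub_left (hmono hmn) f)
    (fun x => by simpa using (hlim x).const_sub (f x))
  simpa [integral_sub hf (hfs _)] using (tendsto_const_nhds (x := D.integral f)).sub h

theorem integral_le_of_eventually_le {gs : ℕ → X → ℝ} {C : ℝ} (hf : f ∈ D.U)
    (hgs : ∀ n, gs n ∈ D.U) (hmono : Monotone gs) (hle : ∀ x, ∀ᶠ n in atTop, f x ≤ gs n x)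
    (hC : ∀ n, D.integral (gs n) ≤ C) : D.integral f ≤ C := by
  have hinf : ∀ n, f ⊓ gs n ∈ D.U := fun n => D.inf_mem hf (hgs n)
  have hlim : Tendsto (fun n => D.integral (f ⊓ gs n)) atTop (𝓝 (D.integral f)) :=
    tendsto_integral_of_monotone hinf hf (fun m n hmn => inf_le_inf_left f (hmono hmn))
      fun x => tendsto_const_nhds.congr' <| (hle x).mono fun n hn => (inf_eq_left.2 hn).symm
  exact le_of_tendsto' hlim fun n => (integral_mono (hinf n) (hgs n) inf_le_right).trans (hC n)

theorem integral_eq_zero_of_nullSet {S : Set X} (hS : D.NullSet S) (hf : f ∈ D.U) (hf0 : 0 ≤ f)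
    (hfS : ∀ x ∉ S, f x = 0) : D.integral f = 0 := by
  refine le_antisymm ?_ (D.integral_nonneg hf hf0)
  refine integral_le_of_eventually_le hf (gs := fun n : ℕ => (n : ℝ) • S.indicator fun _ => 1)
    (fun n => D.smul_mem _ hS.1) (fun m n hmn x => ?_) (fun x => ?_)
    fun n => by rw [D.integral_smul _ hS.1, hS.2, mul_zero]
  · exact mul_le_mul_of_nonneg_right (Nat.cast_le.2 hmn) (Set.indicator_nonneg (by simp) x)
  · filter_upwards [eventually_ge_atTop ⌈f x⌉₊] with n hn
    by_cases hx : x ∈ S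
    · simpa [hx] using (Nat.le_ceil (f x)).trans (by exact_mod_cast hn)
    · simp [hx, hfS x hx]

theorem rep_indicator_setOf_not_summable {gs : ℕ → X → ℝ} (hgs : ∀ n, gs n ∈ D.U)
    (hsum : Summable fun n => D.integral |gs n|) :
    D.Rep ({x | ¬Summable fun n => |gs n x|}.indicator fun _ => 1)
      (fun n => (-1 : ℝ) ^ n • |gs (n / 2)|) := by
  have hdiv_even : ∀ m, 2 * m / 2 = m := fun m => by omega
  have hdiv_odd : ∀ m, (2 * m + 1) / 2 = m := fun m => by omega
  have habs : ∀ n, |((-1 : ℝ) ^ n • |gs (n / 2)|)| = |gs (n / 2)| := fun n => by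
    ext x; simp
  refine ⟨fun n => D.smul_mem _ (abs_mem (hgs _)), ?_, fun x hx => ?_⟩
  · simp_rw [habs]
    exact .even_add_odd (by simpa only [hdiv_even] using hsum)
      (by simpa only [hdiv_odd] using hsum)
  · have hx' : Summable fun n => |gs n x| := by
      simpa [habs, hdiv_even, Function.comp_def] using
        hx.comp_injective (mul_right_injective₀ two_ne_zero)
    have hsum := HasSum.even_add_odd (f := fun n => ((-1 : ℝ) ^ n • |gs (n / 2)|) x)
      (by simpa [pow_mul, hdiv_even] using hx'.hasSum)
      (by simpa [pow_succ, pow_mul, hdiv_odd] using hx'.hasSum.neg)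
    simpa [hx'] using hsum

theorem integral_le_mul_tsum_of_not_summable {gs : ℕ → X → ℝ} (hgs : ∀ n, gs n ∈ D.U)
    (hsum : Summable fun n => D.integral |gs n|) {S : Set X}
    (hS : S ⊆ {x | ¬Summable fun n => |gs n x|}) (hχ : S.indicator (fun _ => (1 : ℝ)) ∈ D.U)
    {t : ℝ} (ht : 0 < t) :
    D.integral (S.indicator fun _ => 1) ≤ t * ∑' n, D.integral |gs n| := by
  have hP : ∀ N, t • ∑ i ∈ Finset.range N, |gs i| ∈ D.U := fun N =>
    D.smul_mem t (sum_mem fun i _ => abs_mem (hgs i))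
  refine integral_le_of_eventually_le hχ hP (fun m n hmn x => ?_) (fun x => ?_) fun N => ?_
  · simp only [Pi.smul_apply, Finset.sum_apply, Pi.abs_apply, smul_eq_mul]
    gcongr
  · by_cases hx : x ∈ S
    · have hdiv := (not_summable_iff_tendsto_nat_atTop_of_nonneg fun n => abs_nonneg (gs n x)).1
        (hS hx)
      filter_upwards [(hdiv.const_mul_atTop ht).eventually_ge_atTop 1] with N hN
      simpa [hx, Finset.sum_apply] using hN
    · refine Eventually.of_forall fun N => ?_
      simp only [Set.indicator_of_notMem hx, Pi.smul_apply, Finset.sum_apply, Pi.abs_apply,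
        smul_eq_mul]
      exact mul_nonneg ht.le (Finset.sum_nonneg fun i _ => abs_nonneg _)
  · rw [D.integral_smul t (sum_mem fun i _ => abs_mem (hgs i)),
      integral_sum _ fun i _ => abs_mem (hgs i)]
    exact mul_le_mul_of_nonneg_left (hsum.sum_le_tsum _ fun i _ =>
      D.integral_nonneg (abs_mem (hgs i)) fun x => abs_nonneg _) ht.le

theorem nullSet_setOf_not_summable (hD : D.Complete) {gs : ℕ → X → ℝ} (hgs : ∀ n, gs n ∈ D.U)
    (hsum : Summable fun n => D.integral |gs n|) :
    D.NullSet {x | ¬Summable fun n => |gs n x|} := by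
  have hχ := hD _ _ (rep_indicator_setOf_not_summable hgs hsum)
  refine ⟨hχ, le_antisymm ?_ (D.integral_nonneg hχ (Set.indicator_nonneg (by simp)))⟩
  have hlim := (tendsto_one_div_add_atTop_nhds_zero_nat (𝕜 := ℝ)).mul_const
    (∑' n, D.integral |gs n|)
  rw [zero_mul] at hlim
  exact ge_of_tendsto' hlim fun n =>
    integral_le_mul_tsum_of_not_summable hgs hsum subset_rfl hχ Nat.one_div_pos_of_nat

theorem tendsto_integral_abs_sub_of_monotone {fs : ℕ → X → ℝ} (hfs : ∀ n, fs n ∈ D.U)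
    (hf : f ∈ D.U) (hmono : Monotone fs) {S : Set X} (hS : D.NullSet S)
    (hconv : ∀ x ∉ S, Tendsto (fun n => fs n x) atTop (𝓝 (f x)))
    (hdiv : ∀ x ∈ S, Tendsto (fun n => fs n x) atTop atTop) :
    Tendsto (fun n => D.integral |fs n - f|) atTop (𝓝 0) := by
  have hpos : ∀ n, (fs n - f) ⊔ 0 ∈ D.U := fun n => D.sup_mem (sub_mem (hfs n) hf) D.zero_mem
  have hneg : ∀ n, (f - fs n) ⊔ 0 ∈ D.U := fun n => D.sup_mem (sub_mem hf (hfs n)) D.zero_mem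
  have hsplit : ∀ n, |fs n - f| = (f - fs n) ⊔ 0 + (fs n - f) ⊔ 0 := fun n => by
    ext x
    simp [← max_zero_add_max_neg_zero_eq_abs_self (fs n x - f x), add_comm]
  have hpos_zero : ∀ n, D.integral ((fs n - f) ⊔ 0) = 0 := fun n =>
    integral_eq_zero_of_nullSet hS (hpos n) le_sup_right fun x hx => by
      simpa using Monotone.ge_of_tendsto (fun a b h => hmono h x) (hconv x hx) n
  have hlim := D.integral_tendsto_zero (fun n => (f - fs n) ⊔ 0) hneg
    (fun m n hmn => sup_le_sup_right (sub_le_sub_left (hmono hmn) f) 0) fun x => by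
      by_cases hx : x ∈ S
      · refine tendsto_const_nhds.congr' <|
          ((hdiv x hx).eventually_ge_atTop (f x)).mono fun n hn => ?_
        simpa using hn
      · simpa using ((hconv x hx).const_sub (f x)).max (tendsto_const_nhds (x := 0))
  simpa [hsplit, D.integral_add (hneg _) (hpos _), hpos_zero] using hlim

theorem summable_integral_abs_sub_of_monotone {fs : ℕ → X → ℝ} (hfs : ∀ n, fs n ∈ D.U)
    (hmono : Monotone fs) {M : ℝ} (hM : ∀ n, D.integral (fs n) ≤ M) :
    Summable fun n => D.integral |fs (n + 1) - fs n| := by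
  have habs : ∀ n, D.integral |fs (n + 1) - fs n| = D.integral (fs (n + 1)) - D.integral (fs n) :=
    fun n => by
      rw [abs_of_nonneg (sub_nonneg.2 (hmono n.le_succ)), integral_sub (hfs _) (hfs _)]
  refine summable_of_sum_range_le (c := M - D.integral (fs 0))
    (fun n => D.integral_nonneg (abs_mem (sub_mem (hfs _) (hfs _))) fun x => abs_nonneg _)
    fun N => ?_
  rw [Finset.sum_congr rfl fun n _ => habs n, Finset.sum_range_sub (fun n => D.integral (fs n))]
  linarith [hM N]

theorem exists_tendsto_of_monotone (hD : D.Complete) {fs : ℕ → X → ℝ} (hfs : ∀ n, fs n ∈ D.U)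
    (hmono : Monotone fs) {M : ℝ} (hM : ∀ n, D.integral (fs n) ≤ M) :
    ∃ f ∈ D.U, Tendsto (fun n => D.integral |fs n - f|) atTop (𝓝 0) ∧
      ∃ S : Set X, D.NullSet S ∧ ∀ x ∉ S, Tendsto (fun n => fs n x) atTop (𝓝 (f x)) := by
  set gs : ℕ → X → ℝ := fun n => fs (n + 1) - fs n
  have hgs : ∀ n, gs n ∈ D.U := fun n => sub_mem (hfs _) (hfs _)
  have hsum : Summable fun n => D.integral |gs n| :=
    summable_integral_abs_sub_of_monotone hfs hmono hM
  set S : Set X := {x | ¬Summable fun n => |gs n x|}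
  have hS : D.NullSet S := nullSet_setOf_not_summable hD hgs hsum
  set F : X → ℝ := fun x => ∑' n, gs n x
  have hF : F ∈ D.U := hD F gs ⟨hgs, hsum, fun x hx => (Summable.of_abs hx).hasSum⟩
  have hf := D.add_mem (hfs 0) hF
  have hconv : ∀ x ∉ S, Tendsto (fun n => fs n x) atTop (𝓝 ((fs 0 + F) x)) := fun x hx =>
    tendsto_of_hasSum_sub (Summable.of_abs (not_not.1 hx)).hasSum
  have hdiv : ∀ x ∈ S, Tendsto (fun n => fs n x) atTop atTop := fun x hx =>
    tendsto_atTop_of_not_summable_sub (fun a b h => hmono h x) fun h => hx h.abs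
  exact ⟨_, hf, tendsto_integral_abs_sub_of_monotone hfs hf hmono hS hconv hdiv, S, hS, hconv⟩

theorem exists_tendsto_of_antitone (hD : D.Complete) {fs : ℕ → X → ℝ} (hfs : ∀ n, fs n ∈ D.U)
    (hanti : Antitone fs) {M : ℝ} (hM : ∀ n, M ≤ D.integral (fs n)) :
    ∃ f ∈ D.U, Tendsto (fun n => D.integral |fs n - f|) atTop (𝓝 0) ∧
      ∃ S : Set X, D.NullSet S ∧ ∀ x ∉ S, Tendsto (fun n => fs n x) atTop (𝓝 (f x)) := by
  obtain ⟨f, hf, hL1, S, hS, hconv⟩ := exists_tendsto_of_monotone hD (fun n => neg_mem (hfs n))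
    hanti.neg (M := -M) fun n => by rw [integral_neg (hfs n)]; linarith [hM n]
  have habs : ∀ n, |-fs n - f| = |fs n - -f| := fun n => by
    rw [← abs_neg]; congr 1; ring
  exact ⟨-f, neg_mem hf, by simpa only [habs] using hL1, S, hS,
    fun x hx => by simpa using (hconv x hx).neg⟩

end DaniellSpace

open DaniellSpace in
theorem daniell_monotone_convergence_general {X : Type*} (D : DaniellSpace X)
    (hD : D.Complete) (fs : ℕ → X → ℝ) (hfs : ∀ n, fs n ∈ D.U)
    (hmono : Monotone fs ∨ Antitone fs)
    (M : ℝ) (hM : ∀ n, |D.integral (fs n)| ≤ M) :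
    ∃ f ∈ D.U,
      Tendsto (fun n => D.integral |fs n - f|) atTop (𝓝 (0 : ℝ)) ∧
      (∃ S : Set X, D.NullSet S ∧ ∀ x ∉ S, Tendsto (fun n => fs n x) atTop (𝓝 (f x))) ∧
      |D.integral f| ≤ M := by
  obtain ⟨f, hf, hL1, hae⟩ : ∃ f ∈ D.U, Tendsto (fun n => D.integral |fs n - f|) atTop (𝓝 0) ∧
      ∃ S : Set X, D.NullSet S ∧ ∀ x ∉ S, Tendsto (fun n => fs n x) atTop (𝓝 (f x)) := by
    rcases hmono with hmono | hanti
    · exact exists_tendsto_of_monotone hD hfs hmono fun n => (le_abs_self _).trans (hM n)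
    · exact exists_tendsto_of_antitone hD hfs hanti fun n => neg_le_of_abs_le (hM n)
  have hint := tendsto_integral_of_tendsto_integral_abs_sub hfs hf hL1
  exact ⟨f, hf, hL1, hae, le_of_tendsto' hint.abs hM⟩

/-- Monotone Convergence Theorem: in a complete Daniell space, a pointwise monotone
sequence in `𝒰` with `|∫fₙ| ≤ M` converges in norm and a.e. to some `f ∈ 𝒰` with
`|∫f| ≤ M`. -/
theorem daniell_monotone_convergence {X : Type*} [Nonempty X] (D : DaniellSpace X)
    (hD : D.Complete) (fs : ℕ → X → ℝ) (hfs : ∀ n, fs n ∈ D.U)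
    (hmono : Monotone fs ∨ Antitone fs)
    (M : ℝ) (hM : ∀ n, |D.integral (fs n)| ≤ M) :
    ∃ f ∈ D.U,
      Tendsto (fun n => D.integral |fs n - f|) atTop (𝓝 (0 : ℝ)) ∧
      (∃ S : Set X, D.NullSet S ∧ ∀ x ∉ S, Tendsto (fun n => fs n x) atTop (𝓝 (f x))) ∧
      |D.integral f| ≤ M :=
  daniell_monotone_convergence_general D hD fs hfs hmono M hM
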